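/- arXiv:2110.06924 — 2 statements merged into one kernel-verified Lean document; each statement's English description precedes it below -/
import Mathlib

section
/- Suppose ᾱ_R, the closure of the restriction of the image operator α_R to Galois sets, is residuated on Galois sets. Then its residual equals β_{R/}(G) = ⋃{F Galois | α_R(F) ⊆ G}, and this union is itself a Galois set (hence a join). -/
/-!
Since a Galois set `G` is closed, `ᾱ_R(F) ⊆ G` iff `α_R(F) ⊆ G`. Hence the residual `β̄(G)` is a
Galois set `F` with `α_R(F) ⊆ G` which contains every other such `F`: it is both a member and an
upper bound of the family whose union is `β_{R/}(G)`, so it equals that union.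
-/

def rperp {X Y : Type*} (perp : X → Y → Prop) (U : Set X) : Set Y :=
  {y | ∀ x ∈ U, perp x y}

def lperp {X Y : Type*} (perp : X → Y → Prop) (V : Set Y) : Set X :=
  {x | ∀ y ∈ V, perp x y}

def stable {X Y : Type*} (perp : X → Y → Prop) (A : Set X) : Prop :=
  A = lperp perp (rperp perp A)

def alphaOp {X : Type*} (R : X → Set X) (U : Set X) : Set X :=
  ⋃ u ∈ U, R u

def abar {X Y : Type*} (perp : X → Y → Prop) (R : X → Set X) (F : Set X) :
    Set X :=
  lperp perp (rperp perp (alphaOp R F))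

/-- `β_{R/}(G) = ⋃ {F Galois | α_R(F) ⊆ G}`. -/
def betaR {X Y : Type*} (perp : X → Y → Prop) (R : X → Set X) (G : Set X) :
    Set X :=
  ⋃₀ {F | stable perp F ∧ alphaOp R F ⊆ G}

section Polarity

variable {X Y : Type*} (perp : X → Y → Prop)

theorem subset_lperp_rperp (U : Set X) : U ⊆ lperp perp (rperp perp U) :=
  fun x hx _ hy => hy x hx

theorem lperp_rperp_mono {U V : Set X} (h : U ⊆ V) :
    lperp perp (rperp perp U) ⊆ lperp perp (rperp perp V) :=
  fun _ hx y hy => hx y fun z hz => hy z (h hz)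

theorem lperp_rperp_subset_iff {U G : Set X} (hG : stable perp G) :
    lperp perp (rperp perp U) ⊆ G ↔ U ⊆ G :=
  ⟨(subset_lperp_rperp perp U).trans, fun h => (lperp_rperp_mono perp h).trans hG.symm.subset⟩

theorem abar_subset_iff (R : X → Set X) {F G : Set X} (hG : stable perp G) :
    abar perp R F ⊆ G ↔ alphaOp R F ⊆ G :=
  lperp_rperp_subset_iff perp hG

theorem betaR_eq_of_residual {R : X → Set X} {b : Set X → Set X} {G : Set X}
    (hG : stable perp G) (hbG : stable perp (b G))
    (hres : ∀ F, stable perp F → (abar perp R F ⊆ G ↔ F ⊆ b G)) :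
    betaR perp R G = b G := by
  refine Set.Subset.antisymm ?_ ?_
  · exact Set.sUnion_subset fun F ⟨hF, hαF⟩ =>
      (hres F hF).1 ((abar_subset_iff perp R hG).2 hαF)
  · exact Set.subset_sUnion_of_mem
      ⟨hbG, (abar_subset_iff perp R hG).1 ((hres _ hbG).2 subset_rfl)⟩

end Polarity

/-- if `ᾱ_R` is residuated on Galois sets, then its residual
equals `β_{R/}` and `β_{R/}(G)` is itself a Galois set. -/
theorem stmt13 {X Y : Type*} (perp : X → Y → Prop) (R : X → Set X)
    (hres : ∃ bbar : Set X → Set X,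
      (∀ G, stable perp G → stable perp (bbar G)) ∧
      (∀ F G, stable perp F → stable perp G →
        (abar perp R F ⊆ G ↔ F ⊆ bbar G))) :
    ∀ F G, stable perp F → stable perp G →
      (abar perp R F ⊆ G ↔ F ⊆ betaR perp R G) ∧ stable perp (betaR perp R G) := by
  obtain ⟨b, hb_stable, hb_residual⟩ := hres
  intro F G hF hG
  have hβ : betaR perp R G = b G :=
    betaR_eq_of_residual perp hG (hb_stable G hG) fun F' hF' => hb_residual F' G hF' hG
  rw [hβ]
  exact ⟨hb_residual F G hF hG, hb_stable G hG⟩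
end

section
/- Let L be a bounded lattice, X its set of filters, Y its set of ideals, with x ⊥ y iff x ∩ y ≠ ∅. For each a ∈ L, the set ζ₁(a) = {x ∈ X | a ∈ x} equals Γ(x_a) = ^⊥{y_a}, where x_a is the principal filter and y_a the principal ideal generated by a; in particular ζ₁(a) is a Galois stable set, and a ↦ ζ₁(a) is a lattice embedding: ζ₁(a ∧ b) = ζ₁(a) ∩ ζ₁(b) and ζ₁(a ∨ b) = the Galois closure of ζ₁(a) ∪ ζ₁(b), with ζ₁ injective. -/
/-- A (lattice) filter: nonempty, upward closed, closed under meets. -/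
def isFilter {L : Type*} [Lattice L] (x : Set L) : Prop :=
  x.Nonempty ∧ (∀ a b, a ∈ x → a ≤ b → b ∈ x) ∧
    (∀ a b, a ∈ x → b ∈ x → a ⊓ b ∈ x)

/-- A (lattice) ideal: nonempty, downward closed, closed under joins. -/
def isIdeal {L : Type*} [Lattice L] (y : Set L) : Prop :=
  y.Nonempty ∧ (∀ a b, a ∈ y → b ≤ a → b ∈ y) ∧
    (∀ a b, a ∈ y → b ∈ y → a ⊔ b ∈ y)

/-- The set of filters of `L`. -/
def Filt (L : Type*) [Lattice L] := {x : Set L // isFilter x}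

/-- The set of ideals of `L`. -/
def Idl (L : Type*) [Lattice L] := {y : Set L // isIdeal y}

/-- The canonical polarity relation: `x ⊥ y` iff `x ∩ y ≠ ∅`. -/
def perpF {L : Type*} [Lattice L] (x : Filt L) (y : Idl L) : Prop :=
  ∃ c, c ∈ x.1 ∧ c ∈ y.1

/-- The principal filter `x_a = {b | a ≤ b}`. -/
def pFilt {L : Type*} [Lattice L] (a : L) : Filt L :=
  ⟨{b | a ≤ b}, ⟨a, le_refl a⟩, fun _ _ hb hbc => le_trans hb hbc,
    fun _ _ hb hc => le_inf hb hc⟩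

/-- The principal ideal `y_a = {b | b ≤ a}`. -/
def pIdl {L : Type*} [Lattice L] (a : L) : Idl L :=
  ⟨{b | b ≤ a}, ⟨a, le_refl a⟩, fun _ _ hb hbc => le_trans hbc hb,
    fun _ _ hb hc => sup_le hb hc⟩

/-- The representation map `ζ₁(a) = {x ∈ Filt(L) | a ∈ x}`. -/
def zeta1 {L : Type*} [Lattice L] (a : L) : Set (Filt L) :=
  {x | a ∈ x.1}

namespace Filt

variable {L : Type*} [Lattice L]

theorem mem_of_le (x : Filt L) {a b : L} (ha : a ∈ x.1) (hab : a ≤ b) : b ∈ x.1 :=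
  x.2.2.1 a b ha hab

theorem inf_mem_iff (x : Filt L) {a b : L} : a ⊓ b ∈ x.1 ↔ a ∈ x.1 ∧ b ∈ x.1 :=
  ⟨fun h => ⟨x.mem_of_le h inf_le_left, x.mem_of_le h inf_le_right⟩,
    fun h => x.2.2.2 a b h.1 h.2⟩

end Filt

namespace Idl

variable {L : Type*} [Lattice L]

theorem mem_of_le (y : Idl L) {a b : L} (ha : a ∈ y.1) (hba : b ≤ a) : b ∈ y.1 :=
  y.2.2.1 a b ha hba

theorem sup_mem_iff (y : Idl L) {a b : L} : a ⊔ b ∈ y.1 ↔ a ∈ y.1 ∧ b ∈ y.1 :=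
  ⟨fun h => ⟨y.mem_of_le h le_sup_left, y.mem_of_le h le_sup_right⟩,
    fun h => y.2.2.2 a b h.1 h.2⟩

end Idl

theorem rperp_union {X Y : Type*} (perp : X → Y → Prop) (U V : Set X) :
    rperp perp (U ∪ V) = rperp perp U ∩ rperp perp V := by
  ext y
  exact ⟨fun h => ⟨fun x hx => h x (Or.inl hx), fun x hx => h x (Or.inr hx)⟩,
    fun h x hx => hx.elim (h.1 x) (h.2 x)⟩

section Zeta

variable {L : Type*} [Lattice L]

theorem zeta1_eq_setOf_pFilt_subset (a : L) :
    zeta1 a = {x : Filt L | (pFilt a).1 ⊆ x.1} := by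
  ext x
  exact ⟨fun ha _ hab => x.mem_of_le ha hab, fun h => h (le_refl a)⟩

theorem lperp_setOf_mem (a : L) :
    lperp (perpF (L := L)) {y | a ∈ y.1} = zeta1 a := by
  ext x
  refine ⟨fun h => ?_, fun ha y hy => ⟨a, ha, hy⟩⟩
  obtain ⟨c, hcx, hca⟩ := h (pIdl a) (le_refl a)
  exact x.mem_of_le hcx hca

theorem zeta1_eq_lperp_pIdl (a : L) :
    zeta1 a = lperp (perpF (L := L)) {pIdl a} := by
  ext x
  refine ⟨fun ha y hy => ?_, fun h => ?_⟩
  · rw [Set.mem_singleton_iff.mp hy]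
    exact ⟨a, ha, le_refl a⟩
  · obtain ⟨c, hcx, hca⟩ := h (pIdl a) rfl
    exact x.mem_of_le hcx hca

theorem rperp_zeta1 (a : L) :
    rperp (perpF (L := L)) (zeta1 a) = {y | a ∈ y.1} := by
  ext y
  refine ⟨fun h => ?_, fun ha x hx => ⟨a, hx, ha⟩⟩
  obtain ⟨c, hac, hcy⟩ := h (pFilt a) (le_refl a)
  exact y.mem_of_le hcy hac

theorem lperp_rperp_zeta1 (a : L) :
    lperp (perpF (L := L)) (rperp (perpF (L := L)) (zeta1 a)) = zeta1 a := by
  rw [rperp_zeta1, lperp_setOf_mem]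

theorem zeta1_inf (a b : L) : zeta1 (a ⊓ b) = zeta1 a ∩ zeta1 b := by
  ext x
  exact x.inf_mem_iff

theorem lperp_rperp_zeta1_union (a b : L) :
    lperp (perpF (L := L)) (rperp (perpF (L := L)) (zeta1 a ∪ zeta1 b)) = zeta1 (a ⊔ b) := by
  have hrperp : rperp (perpF (L := L)) (zeta1 a ∪ zeta1 b) = {y | a ⊔ b ∈ y.1} := by
    ext y
    rw [rperp_union, rperp_zeta1, rperp_zeta1]
    exact y.sup_mem_iff.symm
  rw [hrperp, lperp_setOf_mem]

theorem zeta1_subset_zeta1_iff {a b : L} : zeta1 a ⊆ zeta1 b ↔ a ≤ b :=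
  ⟨fun h => @h (pFilt a) (le_refl a), fun hab x ha => x.mem_of_le ha hab⟩

theorem zeta1_injective : Function.Injective (zeta1 (L := L)) := fun _ _ h =>
  le_antisymm (zeta1_subset_zeta1_iff.mp h.le) (zeta1_subset_zeta1_iff.mp h.ge)

end Zeta

theorem stmt17_general {L : Type*} [Lattice L] :
    (∀ a : L, zeta1 a = {x : Filt L | (pFilt a).1 ⊆ x.1}) ∧
    (∀ a : L, zeta1 a = lperp (perpF (L := L)) {pIdl a}) ∧
    (∀ a : L, zeta1 a = lperp (perpF (L := L)) (rperp (perpF (L := L)) (zeta1 a))) ∧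
    (∀ a b : L, zeta1 (a ⊓ b) = zeta1 a ∩ zeta1 b) ∧
    (∀ a b : L, zeta1 (a ⊔ b) =
      lperp (perpF (L := L)) (rperp (perpF (L := L)) (zeta1 a ∪ zeta1 b))) ∧
    Function.Injective (zeta1 (L := L)) :=
  ⟨zeta1_eq_setOf_pFilt_subset, zeta1_eq_lperp_pIdl,
    fun a => (lperp_rperp_zeta1 a).symm, zeta1_inf,
    fun a b => (lperp_rperp_zeta1_union a b).symm, zeta1_injective⟩

/-- `ζ₁(a) = Γ(x_a) = ^⊥{y_a}`; `ζ₁(a)` is Galois stable; and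
`ζ₁` is a lattice embedding: it turns meets into intersections, joins into
Galois closures of unions, and is injective. -/
theorem stmt17 {L : Type*} [Lattice L] [BoundedOrder L] :
    (∀ a : L, zeta1 a = {x : Filt L | (pFilt a).1 ⊆ x.1}) ∧
    (∀ a : L, zeta1 a = lperp (perpF (L := L)) {pIdl a}) ∧
    (∀ a : L, zeta1 a = lperp (perpF (L := L)) (rperp (perpF (L := L)) (zeta1 a))) ∧
    (∀ a b : L, zeta1 (a ⊓ b) = zeta1 a ∩ zeta1 b) ∧
    (∀ a b : L, zeta1 (a ⊔ b) =
      lperp (perpF (L := L)) (rperp (perpF (L := L)) (zeta1 a ∪ zeta1 b))) ∧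
    Function.Injective (zeta1 (L := L)) :=
  stmt17_general
end
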